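/- arXiv:1806.03774 — 2 statements merged into one kernel-verified Lean document; each statement's English description precedes it below -/
import Mathlib

section
/- Let p be a prime and let a_1, a_2, a_3, a_4 be integers with 1 ≤ a_1 ≤ a_2 ≤ a_3 ≤ a_4. If b is an integer with 0 ≤ b ≤ a_1, then the number N_b of subgroups of index p^b in ℤ/p^{a_1} × ℤ/p^{a_2} × ℤ/p^{a_3} × ℤ/p^{a_4} satisfies N_b · (p-1)(p^2-1)(p^3-1) = p^{3b+6} - p^{2b+5} - p^{2b+4} - p^{2b+3} + p^{b+3} + p^{b+2} + p^{b+1} - 1. -/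
open Finset



section Helpers

lemma natCard_sigma {ι : Type*} [Fintype ι] (f : ι → Type*) [∀ i, Finite (f i)] :
    Nat.card (Σ i, f i) = ∑ i, Nat.card (f i) := by
  letI : ∀ i, Fintype (f i) := fun i => Fintype.ofFinite _
  simp [Nat.card_eq_fintype_card]

lemma card_eq_sum_fibers {α β : Type*} [Finite α] [Fintype β] (f : α → β) :
    Nat.card α = ∑ b, Nat.card {a : α // f a = b} := by
  haveI : ∀ b : β, Finite {a : α // f a = b} := fun b => Subtype.finite
  rw [← natCard_sigma]
  exact (Nat.card_congr (Equiv.sigmaFiberEquiv f)).symm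

/-- Precomposition equivalence of hom sets. -/
def homCongrLeft {A B C : Type*} [AddCommGroup A] [AddCommGroup B] [AddCommGroup C]
    (e : A ≃+ B) : (A →+ C) ≃ (B →+ C) where
  toFun f := f.comp e.symm.toAddMonoidHom
  invFun g := g.comp e.toAddMonoidHom
  left_inv f := by ext x; simp
  right_inv g := by ext x; simp

/-- Postcomposition equivalence of hom sets. -/
def homCongrRight {A B C : Type*} [AddCommGroup A] [AddCommGroup B] [AddCommGroup C]
    (e : B ≃+ C) : (A →+ B) ≃ (A →+ C) where
  toFun f := e.toAddMonoidHom.comp f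
  invFun g := e.symm.toAddMonoidHom.comp g
  left_inv f := by ext x; simp
  right_inv g := by ext x; simp

lemma card_torsion_zmod (n k : ℕ) (hn : n ≠ 0) :
    Nat.card {x : ZMod n // k • x = 0} = n.gcd k := by
  haveI : NeZero n := ⟨hn⟩
  set φ : ZMod n →+ ZMod n := AddMonoidHom.mulLeft ((k : ℕ) : ZMod n) with hφ
  have hker : ∀ x : ZMod n, x ∈ φ.ker ↔ k • x = 0 := by
    intro x
    rw [AddMonoidHom.mem_ker]
    show ((k : ℕ) : ZMod n) * x = 0 ↔ k • x = 0
    rw [nsmul_eq_mul]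
  have hrange : φ.range = AddSubgroup.zmultiples ((k : ℕ) : ZMod n) := by
    ext y
    constructor
    · rintro ⟨x, rfl⟩
      show ((k : ℕ) : ZMod n) * x ∈ _
      refine ⟨(x.val : ℤ), ?_⟩
      show (x.val : ℤ) • ((k : ℕ) : ZMod n) = _
      rw [zsmul_eq_mul, mul_comm]
      push_cast
      rw [ZMod.natCast_val, ZMod.cast_id]
    · rintro ⟨z, rfl⟩
      refine ⟨(z : ZMod n), ?_⟩
      show ((k : ℕ) : ZMod n) * (z : ZMod n) = z • ((k : ℕ) : ZMod n)
      rw [zsmul_eq_mul, mul_comm]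
  have h1 : Nat.card (ZMod n) = Nat.card (ZMod n ⧸ φ.ker) * Nat.card φ.ker :=
    AddSubgroup.card_eq_card_quotient_mul_card_addSubgroup φ.ker
  have h2 : Nat.card (ZMod n ⧸ φ.ker) = n / n.gcd k := by
    rw [Nat.card_congr (QuotientAddGroup.quotientKerEquivRange φ).toEquiv, hrange,
      Nat.card_zmultiples, ZMod.addOrderOf_coe _ hn]
  have h3 : Nat.card (ZMod n) = n := Nat.card_zmod n
  have h4 : Nat.card φ.ker = Nat.card {x : ZMod n // k • x = 0} :=
    Nat.card_congr (Equiv.subtypeEquivRight hker)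
  have hgd : n.gcd k ∣ n := Nat.gcd_dvd_left n k
  have hgpos : 0 < n.gcd k := Nat.gcd_pos_of_pos_left k (Nat.pos_of_ne_zero hn)
  rw [h2, h3, h4] at h1
  have hqpos : 0 < n / n.gcd k := Nat.div_pos (Nat.le_of_dvd (Nat.pos_of_ne_zero hn) hgd) hgpos
  have key : n / n.gcd k * n.gcd k = n / n.gcd k * Nat.card {x : ZMod n // k • x = 0} := by
    rw [Nat.div_mul_cancel hgd]; exact h1
  exact (Nat.eq_of_mul_eq_mul_left hqpos key).symm

lemma card_hom_cyclic (k m : ℕ) (hm : m ≠ 0) :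
    Nat.card (ZMod k →+ ZMod m) = m.gcd k := by
  have e1 : (ZMod k →+ ZMod m) ≃ { f : ℤ →+ ZMod m // f k = 0 } := (ZMod.lift k).symm
  have e2 : { f : ℤ →+ ZMod m // f (k : ℤ) = 0 } ≃ { a : ZMod m // k • a = 0 } := by
    refine ((zmultiplesHom (ZMod m)).subtypeEquiv ?_).symm
    intro a
    rw [zmultiplesHom_apply, natCast_zsmul]
  rw [Nat.card_congr (e1.trans e2), card_torsion_zmod m k hm]

end Helpers



/-- Equiv between homs out of a direct sum and families of homs. -/
noncomputable def directSumHomEquiv {ι : Type} [Fintype ι] (n : ι → ℕ) (C : Type*)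
    [AddCommGroup C] : ((DirectSum ι fun i => ZMod (n i)) →+ C) ≃ (∀ i, ZMod (n i) →+ C) := by
  classical
  exact
  { toFun := fun g i => g.comp (DirectSum.of (fun i => ZMod (n i)) i)
    invFun := fun f => DirectSum.toAddMonoid f
    left_inv := fun g => by
      apply DirectSum.addHom_ext
      intro i x
      simp [DirectSum.toAddMonoid_of]
    right_inv := fun f => by
      funext i
      ext x
      simp [DirectSum.toAddMonoid_of] }

lemma card_hom_eq_card_torsion (G : Type*) [AddCommGroup G] [Finite G] (m : ℕ) (hm : m ≠ 0) :
    Nat.card (G →+ ZMod m) = Nat.card {x : G // m • x = 0} := by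
  classical
  obtain ⟨ι, hι, n, hn, ⟨e⟩⟩ := AddCommGroup.equiv_directSum_zmod_of_finite' G
  haveI : ∀ i, NeZero (n i) := fun i => ⟨by have := hn i; omega⟩
  -- hom side
  have h1 : Nat.card (G →+ ZMod m) = ∏ i, (m.gcd (n i)) := by
    rw [Nat.card_congr ((homCongrLeft e).trans (directSumHomEquiv n (ZMod m)))]
    rw [Nat.card_pi]
    exact Finset.prod_congr rfl fun i _ => card_hom_cyclic (n i) m hm
  -- torsion side
  have e2 : {x : G // m • x = 0} ≃ {x : (∀ i, ZMod (n i)) // m • x = 0} := by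
    set E := e.trans (DirectSum.addEquivProd fun i => ZMod (n i)) with hE
    refine E.toEquiv.subtypeEquiv ?_
    intro x
    show m • x = 0 ↔ m • E x = 0
    rw [← map_nsmul, EmbeddingLike.map_eq_zero_iff]
  have h2 : Nat.card {x : G // m • x = 0} = ∏ i, ((n i).gcd m) := by
    rw [Nat.card_congr e2]
    have e3 : {x : (∀ i, ZMod (n i)) // m • x = 0} ≃ ∀ i, {y : ZMod (n i) // m • y = 0} := by
      refine (Equiv.subtypeEquivRight ?_).trans (Equiv.subtypePiEquivPi)
      intro x
      simp [funext_iff]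
    rw [Nat.card_congr e3, Nat.card_pi]
    exact Finset.prod_congr rfl fun i _ => card_torsion_zmod (n i) m (NeZero.ne _)
  rw [h1, h2]
  exact Finset.prod_congr rfl fun i _ => Nat.gcd_comm _ _



/-- The torsion subgroup `{x : ZMod n | d • x = 0}`. -/
def torSub (n d : ℕ) : AddSubgroup (ZMod n) :=
  (AddMonoidHom.mulLeft ((d : ℕ) : ZMod n)).ker

lemma mem_torSub {n d : ℕ} {x : ZMod n} : x ∈ torSub n d ↔ d • x = 0 := by
  rw [torSub, AddMonoidHom.mem_ker]
  show ((d : ℕ) : ZMod n) * x = 0 ↔ d • x = 0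
  rw [nsmul_eq_mul]

lemma card_torSub {n d : ℕ} (hn : n ≠ 0) (h : d ∣ n) : Nat.card (torSub n d) = d := by
  have : Nat.card (torSub n d) = Nat.card {x : ZMod n // d • x = 0} :=
    Nat.card_congr (Equiv.subtypeEquivRight fun x => mem_torSub)
  rw [this, card_torsion_zmod n d hn, Nat.gcd_eq_right h]

lemma index_torSub {n d e : ℕ} (hn : n ≠ 0) (h : n = d * e) :
    (torSub n d).index = e := by
  haveI : NeZero n := ⟨hn⟩
  have hd : d ∣ n := ⟨e, h⟩
  have hdpos : 0 < d := Nat.pos_of_dvd_of_pos hd (Nat.pos_of_ne_zero hn)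
  have h1 : Nat.card (torSub n d) * (torSub n d).index = Nat.card (ZMod n) :=
    AddSubgroup.card_mul_index _
  rw [card_torSub hn hd, Nat.card_zmod] at h1
  exact Nat.eq_of_mul_eq_mul_left hdpos (h1.trans h)

/-- A subgroup of `ZMod (p^a)` of index `p^c` is the torsion subgroup. -/
lemma subgroup_eq_torSub {p a c : ℕ} (hp : p.Prime) (hc : c ≤ a) (K : AddSubgroup (ZMod (p ^ a)))
    (hK : K.index = p ^ c) : K = torSub (p ^ a) (p ^ (a - c)) := by
  have hpa : p ^ a ≠ 0 := (pow_pos hp.pos a).ne'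
  haveI : NeZero (p ^ a) := ⟨hpa⟩
  have hsplit : p ^ a = p ^ (a - c) * p ^ c := by
    rw [← pow_add]; congr 1; omega
  have h1 : Nat.card K * K.index = Nat.card (ZMod (p ^ a)) := AddSubgroup.card_mul_index _
  rw [hK, Nat.card_zmod] at h1
  have hcK : Nat.card K = p ^ (a - c) :=
    Nat.eq_of_mul_eq_mul_right (pow_pos hp.pos c) (h1.trans hsplit)
  have hle : (K : Set (ZMod (p ^ a))) ⊆ (torSub (p ^ a) (p ^ (a - c)) : Set (ZMod (p ^ a))) := by
    intro x hx
    have h0 : (p ^ (a - c)) • (⟨x, hx⟩ : K) = 0 := by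
      rw [← hcK]; exact card_nsmul_eq_zero'
    have hco : (((p ^ (a - c)) • (⟨x, hx⟩ : K) : K) : ZMod (p ^ a)) = (p ^ (a - c)) • x :=
      AddSubmonoidClass.coe_nsmul _ _
    rw [SetLike.mem_coe, mem_torSub, ← hco, h0]
    rfl
  have hcT : Nat.card (torSub (p ^ a) (p ^ (a - c))) = p ^ (a - c) :=
    card_torSub hpa ⟨p ^ c, hsplit⟩
  have hKn : (K : Set (ZMod (p ^ a))).ncard = p ^ (a - c) := by
    rw [← Nat.card_coe_set_eq]; exact hcK
  have hTn : ((torSub (p ^ a) (p ^ (a - c)) : AddSubgroup (ZMod (p^a))) :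
      Set (ZMod (p ^ a))).ncard = p ^ (a - c) := by
    rw [← Nat.card_coe_set_eq]; exact hcT
  exact SetLike.coe_injective (Set.eq_of_subset_of_ncard_le hle (by rw [hKn, hTn])
    (Set.toFinite _))

/-- quotient of `ZMod n` by a subgroup of index `m` is `ZMod m`. -/
noncomputable def quotCyclicEquiv {n : ℕ} (K : AddSubgroup (ZMod n)) :
    (ZMod n ⧸ K) ≃+ ZMod K.index := by
  haveI : IsAddCyclic (ZMod n ⧸ K) :=
    isAddCyclic_of_surjective (QuotientAddGroup.mk' K) (QuotientAddGroup.mk'_surjective K)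
  have h : K.index = Nat.card (ZMod n ⧸ K) := AddSubgroup.index_eq_card K
  exact (h ▸ (zmodAddCyclicAddEquiv (inferInstance : IsAddCyclic (ZMod n ⧸ K)))).symm

/-- Base case: cyclic groups have a unique subgroup of each index dividing the order. -/
lemma count_cyclic {p a b : ℕ} (hp : p.Prime) (hb : b ≤ a) :
    Nat.card {H : AddSubgroup (ZMod (p ^ a)) // H.index = p ^ b} = 1 := by
  have hpa : p ^ a ≠ 0 := (pow_pos hp.pos a).ne'
  have hsplit : p ^ a = p ^ (a - b) * p ^ b := by rw [← pow_add]; congr 1; omega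
  haveI : Nonempty {H : AddSubgroup (ZMod (p ^ a)) // H.index = p ^ b} :=
    ⟨⟨torSub (p ^ a) (p ^ (a - b)), index_torSub hpa hsplit⟩⟩
  haveI : Subsingleton {H : AddSubgroup (ZMod (p ^ a)) // H.index = p ^ b} := by
    constructor
    rintro ⟨K, hK⟩ ⟨K', hK'⟩
    apply Subtype.ext
    show K = K'
    rw [subgroup_eq_torSub hp hb K hK, subgroup_eq_torSub hp hb K' hK']
  exact Nat.card_unique


section Goursat

variable {B A : Type*} [AddCommGroup B] [AddCommGroup A]

/-- Projection of a subgroup of `B × A` to `A`. -/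
def gP (H : AddSubgroup (B × A)) : AddSubgroup A := H.map (AddMonoidHom.snd B A)

/-- Intersection of a subgroup of `B × A` with `B × 0`. -/
def gK (H : AddSubgroup (B × A)) : AddSubgroup B := H.comap (AddMonoidHom.inl B A)

lemma mem_gP {H : AddSubgroup (B × A)} {x : A} : x ∈ gP H ↔ ∃ y : B, (y, x) ∈ H := by
  constructor
  · rintro ⟨⟨y, x'⟩, hz, rfl⟩
    exact ⟨y, hz⟩
  · rintro ⟨y, hy⟩
    exact ⟨(y, x), hy, rfl⟩

lemma mem_gK {H : AddSubgroup (B × A)} {y : B} : y ∈ gK H ↔ (y, 0) ∈ H := Iff.rfl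

lemma gK_wd {H : AddSubgroup (B × A)} {y y' : B} {x : A} (h : (y, x) ∈ H)
    (h' : (y', x) ∈ H) : y - y' ∈ gK H := by
  rw [mem_gK]
  have h2 := sub_mem h h'
  have h3 : ((y, x) - (y', x) : B × A) = (y - y', 0) := by
    simp [Prod.ext_iff]
  rwa [h3] at h2

lemma mk_eq_of_pair {H : AddSubgroup (B × A)} {K : AddSubgroup B} (hK : gK H = K)
    {y y' : B} {x : A} (h : (y, x) ∈ H) (h' : (y', x) ∈ H) : (y : B ⧸ K) = y' :=
  (QuotientAddGroup.eq_iff_sub_mem).mpr (hK ▸ gK_wd h h')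

lemma index_gKP [Finite B] [Finite A] (H : AddSubgroup (B × A)) :
    H.index = (gK H).index * (gP H).index := by
  classical
  set ψ := (AddMonoidHom.snd B A).addSubgroupMap H with hψ
  have hsurj : Function.Surjective ψ := (AddMonoidHom.snd B A).addSubgroupMap_surjective H
  have h1 : Nat.card H = Nat.card (↥H ⧸ ψ.ker) * Nat.card ψ.ker :=
    AddSubgroup.card_eq_card_quotient_mul_card_addSubgroup _
  have e1 : (↥H ⧸ ψ.ker) ≃+ gP H := QuotientAddGroup.quotientKerEquivOfSurjective ψ hsurj
  have e2 : ψ.ker ≃ gK H :=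
    { toFun := fun k => ⟨(k : ↥H).1.1, by
        rw [mem_gK]
        have hx : ((k : ↥H) : B × A).2 = 0 := congrArg Subtype.val k.2
        have heq : ((k : ↥H) : B × A) = (((k : ↥H) : B × A).1, 0) := Prod.ext rfl hx
        exact heq ▸ (k : ↥H).2⟩
      invFun := fun y => ⟨⟨((y : B), 0), mem_gK.mp y.2⟩, Subtype.ext rfl⟩
      left_inv := fun k => by
        apply Subtype.ext; apply Subtype.ext
        have hx : ((k : ↥H) : B × A).2 = 0 := congrArg Subtype.val k.2
        exact Prod.ext rfl hx.symm
      right_inv := fun y => rfl }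
  have hcard : Nat.card H = Nat.card (gP H) * Nat.card (gK H) := by
    rw [h1, Nat.card_congr e1.toEquiv, Nat.card_congr e2]
  have hpos : 0 < Nat.card H := Nat.card_pos
  have key : Nat.card ↥H * H.index = Nat.card ↥H * ((gK H).index * (gP H).index) := by
    rw [AddSubgroup.card_mul_index, Nat.card_prod, ← AddSubgroup.card_mul_index (gK H),
      ← AddSubgroup.card_mul_index (gP H), hcard]
    ring
  exact Nat.eq_of_mul_eq_mul_left hpos key

/-- Choice of a lift. -/
noncomputable def pickB (H : AddSubgroup (B × A)) {x : A} (hx : x ∈ gP H) : B :=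
  (mem_gP.mp hx).choose

lemma pickB_mem (H : AddSubgroup (B × A)) {x : A} (hx : x ∈ gP H) : (pickB H hx, x) ∈ H :=
  (mem_gP.mp hx).choose_spec

/-- The hom associated to a subgroup with given projection and kernel. -/
noncomputable def toHom (H : AddSubgroup (B × A)) (P : AddSubgroup A) (K : AddSubgroup B)
    (hP : gP H = P) (hK : gK H = K) : ↥P →+ B ⧸ K :=
  AddMonoidHom.mk'
    (fun x => ((pickB H (show (x : A) ∈ gP H from hP ▸ x.2) : B) : B ⧸ K))
    (by
      intro x x'
      have hx := pickB_mem H (show ((x : ↥P) : A) ∈ gP H from hP ▸ x.2)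
      have hx' := pickB_mem H (show ((x' : ↥P) : A) ∈ gP H from hP ▸ x'.2)
      have h2 : (pickB H (show ((x : ↥P) : A) ∈ gP H from hP ▸ x.2)
          + pickB H (show ((x' : ↥P) : A) ∈ gP H from hP ▸ x'.2),
          ((x + x' : ↥P) : A)) ∈ H := add_mem hx hx'
      have h1 := mk_eq_of_pair hK
        (pickB_mem H (show ((x + x' : ↥P) : A) ∈ gP H from hP ▸ (x + x').2)) h2
      exact h1.trans rfl)

/-- The subgroup associated to a hom. -/
def mkH (P : AddSubgroup A) (K : AddSubgroup B) (φ : ↥P →+ B ⧸ K) : AddSubgroup (B × A) where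
  carrier := {z | ∃ h : z.2 ∈ P, (z.1 : B ⧸ K) = φ ⟨z.2, h⟩}
  zero_mem' := by
    refine ⟨P.zero_mem, ?_⟩
    show ((0 : B) : B ⧸ K) = φ ⟨0, P.zero_mem⟩
    have h0 : (⟨(0 : A), P.zero_mem⟩ : ↥P) = 0 := rfl
    rw [h0, map_zero]
    rfl
  add_mem' := by
    rintro ⟨y, x⟩ ⟨y', x'⟩ ⟨h, hy⟩ ⟨h', hy'⟩
    refine ⟨P.add_mem h h', ?_⟩
    show ((y + y' : B) : B ⧸ K) = φ ⟨x + x', P.add_mem h h'⟩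
    have hy2 : (y : B ⧸ K) = φ ⟨x, h⟩ := hy
    have hy2' : (y' : B ⧸ K) = φ ⟨x', h'⟩ := hy'
    have hmk : ((y + y' : B) : B ⧸ K) = (y : B ⧸ K) + (y' : B ⧸ K) := rfl
    rw [hmk, hy2, hy2', ← map_add]
    rfl
  neg_mem' := by
    rintro ⟨y, x⟩ ⟨h, hy⟩
    refine ⟨P.neg_mem h, ?_⟩
    show ((-y : B) : B ⧸ K) = φ ⟨-x, P.neg_mem h⟩
    have hy2 : (y : B ⧸ K) = φ ⟨x, h⟩ := hy
    have hmk : ((-y : B) : B ⧸ K) = -(y : B ⧸ K) := rfl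
    rw [hmk, hy2, ← map_neg]
    rfl

lemma mem_mkH {P : AddSubgroup A} {K : AddSubgroup B} {φ : ↥P →+ B ⧸ K} {y : B} {x : A} :
    (y, x) ∈ mkH P K φ ↔ ∃ h : x ∈ P, (y : B ⧸ K) = φ ⟨x, h⟩ := Iff.rfl

lemma gP_mkH (P : AddSubgroup A) (K : AddSubgroup B) (φ : ↥P →+ B ⧸ K) :
    gP (mkH P K φ) = P := by
  ext x
  rw [mem_gP]
  constructor
  · rintro ⟨y, h, _⟩
    exact h
  · intro hx
    obtain ⟨y, hy⟩ := QuotientAddGroup.mk'_surjective K (φ ⟨x, hx⟩)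
    exact ⟨y, hx, hy⟩

lemma gK_mkH (P : AddSubgroup A) (K : AddSubgroup B) (φ : ↥P →+ B ⧸ K) :
    gK (mkH P K φ) = K := by
  ext y
  rw [mem_gK, mem_mkH]
  constructor
  · rintro ⟨h, hy⟩
    have h0 : (⟨(0 : A), h⟩ : ↥P) = 0 := rfl
    rw [h0, map_zero] at hy
    exact (QuotientAddGroup.eq_zero_iff y).mp hy
  · intro hy
    refine ⟨P.zero_mem, ?_⟩
    have h0 : (⟨(0 : A), P.zero_mem⟩ : ↥P) = 0 := rfl
    rw [h0, map_zero]
    exact (QuotientAddGroup.eq_zero_iff y).mpr hy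

/-- The Goursat-type classification of subgroups with fixed projection and kernel. -/
noncomputable def goursatEquiv (P : AddSubgroup A) (K : AddSubgroup B) :
    {H : AddSubgroup (B × A) // gP H = P ∧ gK H = K} ≃ (↥P →+ B ⧸ K) where
  toFun := fun s => toHom s.1 P K s.2.1 s.2.2
  invFun := fun φ => ⟨mkH P K φ, gP_mkH P K φ, gK_mkH P K φ⟩
  left_inv := by
    rintro ⟨H, hP, hK⟩
    apply Subtype.ext
    show mkH P K (toHom H P K hP hK) = H
    ext ⟨y, x⟩
    rw [mem_mkH]
    constructor
    · rintro ⟨h, hy⟩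
      have hy2 : (y : B ⧸ K) =
          ((pickB H (show (x : A) ∈ gP H from hP ▸ h) : B) : B ⧸ K) := hy
      have hpick := pickB_mem H (show (x : A) ∈ gP H from hP ▸ h)
      have hsub : y - pickB H (show (x : A) ∈ gP H from hP ▸ h) ∈ gK H := by
        rw [hK]
        exact (QuotientAddGroup.eq_iff_sub_mem).mp hy2
      have hsub' : (y - pickB H (show (x : A) ∈ gP H from hP ▸ h), (0 : A)) ∈ H :=
        mem_gK.mp hsub
      have hfin := add_mem hsub' hpick
      simpa using hfin
    · intro hyx
      have h : x ∈ P := hP ▸ (mem_gP.mpr ⟨y, hyx⟩)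
      exact ⟨h, mk_eq_of_pair hK hyx (pickB_mem H (show (x : A) ∈ gP H from hP ▸ h))⟩
  right_inv := by
    intro φ
    ext x
    obtain ⟨h, hy⟩ := mem_mkH.mp (pickB_mem (mkH P K φ)
      (show ((x : ↥P) : A) ∈ gP (mkH P K φ) by rw [gP_mkH]; exact x.2))
    exact hy.trans (congrArg φ (Subtype.ext rfl))

end Goursat

section Recursion

set_option maxHeartbeats 1000000 in
lemma rec_count (p a s k b : ℕ) (hp : p.Prime) (hb : b ≤ s) (hs : s ≤ a)
    (A : Type) [AddCommGroup A] [Finite A]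
    (hTorCard : ∀ c, c ≤ s → Nat.card {x : A // p ^ c • x = 0} = p ^ (k * c))
    (hTorDiv : ∀ c d, c + d ≤ s → ∀ x : A, p ^ c • x = 0 → ∃ y : A, p ^ d • y = x) :
    Nat.card {H : AddSubgroup (ZMod (p ^ a) × A) // H.index = p ^ b}
      = ∑ c ∈ range (b + 1), p ^ (k * c) *
          Nat.card {P : AddSubgroup A // P.index = p ^ (b - c)} := by
  classical
  haveI : NeZero (p ^ a) := ⟨(pow_pos hp.pos a).ne'⟩
  haveI : Finite (AddSubgroup (ZMod (p ^ a) × A)) :=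
    Finite.of_injective (fun H : AddSubgroup (ZMod (p ^ a) × A) => (H : Set (ZMod (p ^ a) × A)))
      SetLike.coe_injective
  haveI : Finite (AddSubgroup A) :=
    Finite.of_injective (fun P : AddSubgroup A => (P : Set A)) SetLike.coe_injective
  -- splitting of indices
  have hsplit : ∀ H : AddSubgroup (ZMod (p ^ a) × A), H.index = p ^ b →
      ∃ c, c ≤ b ∧ (gK H).index = p ^ c ∧ (gP H).index = p ^ (b - c) := by
    intro H hH
    have hmul : (gK H).index * (gP H).index = p ^ b := (index_gKP H).symm.trans hH
    obtain ⟨c, hc, hKc⟩ := (Nat.dvd_prime_pow hp).mp ⟨(gP H).index, hmul.symm⟩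
    refine ⟨c, hc, hKc, ?_⟩
    have h2 : p ^ c * (gP H).index = p ^ b := by rw [← hKc]; exact hmul
    have h3 : p ^ b = p ^ c * p ^ (b - c) := by rw [← pow_add]; congr 1; omega
    exact Nat.eq_of_mul_eq_mul_left (pow_pos hp.pos c) (h2.trans h3)
  -- the fibering map
  have hfb : ∀ H' : {H : AddSubgroup (ZMod (p ^ a) × A) // H.index = p ^ b},
      (gK H'.1).index.factorization p < b + 1 := by
    rintro ⟨H, hH⟩
    obtain ⟨c, hc, hKc, -⟩ := hsplit H hH
    simp only [hKc, hp.factorization_pow, Finsupp.single_eq_same]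
    omega
  set f : {H : AddSubgroup (ZMod (p ^ a) × A) // H.index = p ^ b} → Fin (b + 1) :=
    fun H' => ⟨(gK H'.1).index.factorization p, hfb H'⟩ with hf
  have key : ∀ i : Fin (b + 1),
      Nat.card {H' : {H : AddSubgroup (ZMod (p ^ a) × A) // H.index = p ^ b} // f H' = i}
        = p ^ (k * (i : ℕ)) *
          Nat.card {P : AddSubgroup A // P.index = p ^ (b - (i : ℕ))} := by
    intro i
    set c : ℕ := (i : ℕ) with hc'
    have hcb : c ≤ b := Nat.lt_succ_iff.mp i.2
    have hca : c ≤ a := le_trans (le_trans hcb hb) hs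
    set KC : AddSubgroup (ZMod (p ^ a)) := torSub (p ^ a) (p ^ (a - c)) with hKC
    have hsplitpow : p ^ a = p ^ (a - c) * p ^ c := by rw [← pow_add]; congr 1; omega
    have hKCi : KC.index = p ^ c := index_torSub (pow_pos hp.pos a).ne' hsplitpow
    -- first equivalence: fibers are subgroups with given K-index
    have e1 : {H' : {H : AddSubgroup (ZMod (p ^ a) × A) // H.index = p ^ b} // f H' = i} ≃
        {H : AddSubgroup (ZMod (p ^ a) × A) // (gP H).index = p ^ (b - c) ∧ gK H = KC} := by
      refine (Equiv.subtypeEquivRight (q := fun H' => (gK H'.1).index.factorization p = c)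
        (fun H' => ⟨fun h => congrArg Fin.val h, fun h => Fin.ext h⟩)).trans
        ((Equiv.subtypeSubtypeEquivSubtypeInter
          (fun H : AddSubgroup (ZMod (p ^ a) × A) => H.index = p ^ b)
          (fun H => (gK H).index.factorization p = c)).trans
        (Equiv.subtypeEquivRight ?_))
      intro H
      constructor
      · rintro ⟨hH, hfH⟩
        obtain ⟨c₀, hc₀, hKc₀, hPc₀⟩ := hsplit H hH
        have : c₀ = c := by
          rw [hKc₀, hp.factorization_pow, Finsupp.single_eq_same] at hfH
          exact hfH
        subst this
        exact ⟨hPc₀, subgroup_eq_torSub hp hca (gK H) hKc₀⟩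
      · rintro ⟨hPi, hKt⟩
        have hKi : (gK H).index = p ^ c := by rw [hKt]; exact hKCi
        have hHi : H.index = p ^ b := by
          rw [index_gKP H, hKi, hPi, ← pow_add]
          congr 1
          omega
        refine ⟨hHi, ?_⟩
        rw [hKi, hp.factorization_pow, Finsupp.single_eq_same]
    rw [Nat.card_congr e1]
    -- second fibering: over the projection P
    letI : Fintype {P : AddSubgroup A // P.index = p ^ (b - c)} := Fintype.ofFinite _
    have e2 := card_eq_sum_fibers
      (f := fun H' : {H : AddSubgroup (ZMod (p ^ a) × A) //
          (gP H).index = p ^ (b - c) ∧ gK H = KC} =>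
        (⟨gP H'.1, H'.2.1⟩ : {P : AddSubgroup A // P.index = p ^ (b - c)}))
    rw [e2]
    -- each inner fiber is a hom set
    have inner : ∀ P : {P : AddSubgroup A // P.index = p ^ (b - c)},
        Nat.card {H' : {H : AddSubgroup (ZMod (p ^ a) × A) //
            (gP H).index = p ^ (b - c) ∧ gK H = KC} //
            (⟨gP H'.1, H'.2.1⟩ : {P : AddSubgroup A // P.index = p ^ (b - c)}) = P}
          = p ^ (k * c) := by
      rintro ⟨Pv, hPv⟩
      have e3 : {H' : {H : AddSubgroup (ZMod (p ^ a) × A) //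
            (gP H).index = p ^ (b - c) ∧ gK H = KC} //
            (⟨gP H'.1, H'.2.1⟩ : {P : AddSubgroup A // P.index = p ^ (b - c)})
              = ⟨Pv, hPv⟩} ≃
          {H : AddSubgroup (ZMod (p ^ a) × A) // gP H = Pv ∧ gK H = KC} := by
        refine (Equiv.subtypeEquivRight (q := fun H' => gP H'.1 = Pv)
          (fun H' => ⟨fun h => congrArg Subtype.val h, fun h => Subtype.ext h⟩)).trans
          ((Equiv.subtypeSubtypeEquivSubtypeInter
            (fun H : AddSubgroup (ZMod (p ^ a) × A) => (gP H).index = p ^ (b - c) ∧ gK H = KC)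
            (fun H => gP H = Pv)).trans
          (Equiv.subtypeEquivRight ?_))
        intro H
        constructor
        · rintro ⟨⟨hPi, hKt⟩, hPeq⟩
          exact ⟨hPeq, hKt⟩
        · rintro ⟨hPeq, hKt⟩
          exact ⟨⟨hPeq ▸ hPv, hKt⟩, hPeq⟩
      rw [Nat.card_congr e3, Nat.card_congr (goursatEquiv Pv KC)]
      -- count homs into B ⧸ KC ≃ ZMod (p ^ c)
      have equot : (ZMod (p ^ a) ⧸ KC) ≃+ ZMod (p ^ c) := hKCi ▸ quotCyclicEquiv KC
      rw [Nat.card_congr (homCongrRight (A := ↥Pv) equot)]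
      have hpc : (p : ℕ) ^ c ≠ 0 := (pow_pos hp.pos c).ne'
      rw [card_hom_eq_card_torsion ↥Pv (p ^ c) hpc]
      -- squeeze: the torsion of P is the torsion of A
      have hmemP : ∀ v : A, p ^ c • v = 0 → v ∈ Pv := by
        intro v hv
        obtain ⟨y, hy⟩ := hTorDiv c (b - c) (by omega) v hv
        have := AddSubgroup.nsmul_index_mem Pv y
        rw [hPv] at this
        rwa [hy] at this
      have esq : {x : ↥Pv // p ^ c • x = 0} ≃ {x : A // p ^ c • x = 0} :=
        { toFun := fun u => ⟨(u.1 : A), by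
            have h := congrArg (Subtype.val) u.2
            rwa [AddSubmonoidClass.coe_nsmul] at h⟩
          invFun := fun v => ⟨⟨v.1, hmemP v.1 v.2⟩, by
            apply Subtype.ext
            rw [AddSubmonoidClass.coe_nsmul]
            exact v.2⟩
          left_inv := fun u => by apply Subtype.ext; apply Subtype.ext; rfl
          right_inv := fun v => by apply Subtype.ext; rfl }
      rw [Nat.card_congr esq]
      exact hTorCard c (le_trans hcb hb)
    rw [Finset.sum_congr rfl (fun P _ => inner P), Finset.sum_const, smul_eq_mul,
      mul_comm, Finset.card_univ, Nat.card_eq_fintype_card]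
  rw [card_eq_sum_fibers f]
  rw [Finset.sum_congr rfl (fun i _ => key i)]
  exact Fin.sum_univ_eq_sum_range
    (fun c => p ^ (k * c) * Nat.card {P : AddSubgroup A // P.index = p ^ (b - c)}) (b + 1)

end Recursion

section Torsion

lemma torCard_zmod {p a c : ℕ} (hp : p.Prime) (hc : c ≤ a) :
    Nat.card {x : ZMod (p ^ a) // p ^ c • x = 0} = p ^ c := by
  rw [card_torsion_zmod _ _ (pow_pos hp.pos a).ne']
  exact Nat.gcd_eq_right (pow_dvd_pow p hc)

lemma torDiv_zmod {p a c d : ℕ} (hp : p.Prime) (h : c + d ≤ a) :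
    ∀ x : ZMod (p ^ a), p ^ c • x = 0 → ∃ y : ZMod (p ^ a), p ^ d • y = x := by
  haveI : NeZero (p ^ a) := ⟨(pow_pos hp.pos a).ne'⟩
  intro x hx
  have hx' : ((p ^ c * x.val : ℕ) : ZMod (p ^ a)) = 0 := by
    rw [Nat.cast_mul, ZMod.natCast_val, ZMod.cast_id, ← nsmul_eq_mul]
    exact hx
  have hdvd : p ^ a ∣ p ^ c * x.val := (ZMod.natCast_eq_zero_iff _ _).mp hx'
  obtain ⟨t, ht⟩ := hdvd
  have hsplit : p ^ a = p ^ c * p ^ (a - c) := by rw [← pow_add]; congr 1; omega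
  have hval : x.val = p ^ (a - c) * t := by
    have h2 : p ^ c * x.val = p ^ c * (p ^ (a - c) * t) := by
      rw [ht, hsplit]; ring
    exact Nat.eq_of_mul_eq_mul_left (pow_pos hp.pos c) h2
  refine ⟨((p ^ (a - c - d) * t : ℕ) : ZMod (p ^ a)), ?_⟩
  have hexp : d + (a - c - d) = a - c := by omega
  calc p ^ d • ((p ^ (a - c - d) * t : ℕ) : ZMod (p ^ a))
      = ((p ^ d * (p ^ (a - c - d) * t) : ℕ) : ZMod (p ^ a)) := by
        rw [nsmul_eq_mul]
        push_cast
        ring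
    _ = ((p ^ (a - c) * t : ℕ) : ZMod (p ^ a)) := by
        congr 1
        rw [← mul_assoc, ← pow_add, hexp]
    _ = x := by rw [← hval, ZMod.natCast_val, ZMod.cast_id]

lemma torCard_prod {X Y : Type} [AddCommGroup X] [AddCommGroup Y] [Finite X] [Finite Y]
    (n : ℕ) :
    Nat.card {z : X × Y // n • z = 0}
      = Nat.card {x : X // n • x = 0} * Nat.card {y : Y // n • y = 0} := by
  have e : {z : X × Y // n • z = 0} ≃ {x : X // n • x = 0} × {y : Y // n • y = 0} := by
    refine (Equiv.subtypeEquivRight ?_).trans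
      (Equiv.subtypeProdEquivProd (p := fun x : X => n • x = 0) (q := fun y : Y => n • y = 0))
    intro z
    rw [Prod.ext_iff]
    rfl
  rw [Nat.card_congr e, Nat.card_prod]

lemma torDiv_prod {X Y : Type} [AddCommGroup X] [AddCommGroup Y] {c d : ℕ}
    (hX : ∀ x : X, c • x = 0 → ∃ y : X, d • y = x)
    (hY : ∀ x : Y, c • x = 0 → ∃ y : Y, d • y = x) :
    ∀ z : X × Y, c • z = 0 → ∃ w : X × Y, d • w = z := by
  rintro ⟨x, y⟩ hz
  rw [Prod.ext_iff] at hz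
  obtain ⟨x', hx'⟩ := hX x hz.1
  obtain ⟨y', hy'⟩ := hY y hz.2
  exact ⟨(x', y'), Prod.ext hx' hy'⟩

end Torsion

section Numeric

open Finset

def tSum (p k : ℕ) (f : ℕ → ℕ) : ℕ → ℕ := fun b => ∑ c ∈ range (b + 1), p ^ (k * c) * f (b - c)

def t3 (p : ℕ) : ℕ → ℕ := tSum p 1 (fun _ => 1)
def t2 (p : ℕ) : ℕ → ℕ := tSum p 2 (t3 p)
def t1 (p : ℕ) : ℕ → ℕ := tSum p 3 (t2 p)

lemma tSum_step (p k : ℕ) (f : ℕ → ℕ) (b : ℕ) :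
    tSum p k f (b + 1) = f (b + 1) + p ^ k * tSum p k f b := by
  unfold tSum
  rw [Finset.sum_range_succ']
  have h1 : ∀ c, p ^ (k * (c + 1)) * f (b + 1 - (c + 1)) = p ^ k * (p ^ (k * c) * f (b - c)) := by
    intro c
    have : k * (c + 1) = k + k * c := by ring
    rw [this, pow_add, Nat.succ_sub_succ]
    ring
  rw [Finset.sum_congr rfl (fun c _ => h1 c), ← Finset.mul_sum]
  simp [add_comm]

lemma tSum_zero (p k : ℕ) (f : ℕ → ℕ) : tSum p k f 0 = f 0 := by
  simp [tSum]

lemma I3 (p b : ℕ) : (t3 p b : ℤ) * ((p : ℤ) - 1) = (p : ℤ) ^ (b + 1) - 1 := by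
  induction b with
  | zero =>
    rw [t3, tSum_zero]
    push_cast
    ring
  | succ b ih =>
    have h : t3 p (b + 1) = 1 + p ^ 1 * t3 p b := tSum_step p 1 (fun _ => 1) b
    rw [h]
    push_cast
    linear_combination (p : ℤ) * ih

lemma I2 (p b : ℕ) : (t2 p b : ℤ) * (((p : ℤ) - 1) * ((p : ℤ) ^ 2 - 1))
    = (p : ℤ) ^ (2 * b + 3) - (p : ℤ) ^ (b + 2) - (p : ℤ) ^ (b + 1) + 1 := by
  induction b with
  | zero =>
    rw [t2, tSum_zero, t3, tSum_zero]
    push_cast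
    ring
  | succ b ih =>
    have h : t2 p (b + 1) = t3 p (b + 1) + p ^ 2 * t2 p b := tSum_step p 2 (t3 p) b
    rw [h]
    push_cast
    have h3 := I3 p (b + 1)
    linear_combination ((p : ℤ) ^ 2 - 1) * h3 + (p : ℤ) ^ 2 * ih

lemma I1 (p b : ℕ) : (t1 p b : ℤ) * (((p : ℤ) - 1) * ((p : ℤ) ^ 2 - 1) * ((p : ℤ) ^ 3 - 1))
    = (p : ℤ) ^ (3 * b + 6) - (p : ℤ) ^ (2 * b + 5) - (p : ℤ) ^ (2 * b + 4)
      - (p : ℤ) ^ (2 * b + 3) + (p : ℤ) ^ (b + 3) + (p : ℤ) ^ (b + 2)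
      + (p : ℤ) ^ (b + 1) - 1 := by
  induction b with
  | zero =>
    rw [t1, tSum_zero, t2, tSum_zero, t3, tSum_zero]
    push_cast
    ring
  | succ b ih =>
    have h : t1 p (b + 1) = t2 p (b + 1) + p ^ 3 * t1 p b := tSum_step p 3 (t2 p) b
    rw [h]
    push_cast
    have h2 := I2 p (b + 1)
    linear_combination ((p : ℤ) ^ 3 - 1) * h2 + (p : ℤ) ^ 3 * ih

end Numeric

/-- Rank 4, case `0 ≤ b ≤ a₁`: counting subgroups of index `p^b`. -/
theorem rank4_case1 (p a₁ a₂ a₃ a₄ b : ℕ) (hp : p.Prime)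
    (ha₁ : 1 ≤ a₁) (h12 : a₁ ≤ a₂) (h23 : a₂ ≤ a₃) (h34 : a₃ ≤ a₄) (hb : b ≤ a₁) :
    (Nat.card {H : AddSubgroup
        (ZMod (p ^ a₁) × ZMod (p ^ a₂) × ZMod (p ^ a₃) × ZMod (p ^ a₄)) //
        H.index = p ^ b} : ℤ) *
        (((p : ℤ) - 1) * ((p : ℤ) ^ 2 - 1) * ((p : ℤ) ^ 3 - 1)) =
      (p : ℤ) ^ (3 * b + 6) - (p : ℤ) ^ (2 * b + 5) - (p : ℤ) ^ (2 * b + 4)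
        - (p : ℤ) ^ (2 * b + 3) + (p : ℤ) ^ (b + 3) + (p : ℤ) ^ (b + 2)
        + (p : ℤ) ^ (b + 1) - 1 := by
  haveI : NeZero (p ^ a₁) := ⟨(pow_pos hp.pos a₁).ne'⟩
  haveI : NeZero (p ^ a₂) := ⟨(pow_pos hp.pos a₂).ne'⟩
  haveI : NeZero (p ^ a₃) := ⟨(pow_pos hp.pos a₃).ne'⟩
  haveI : NeZero (p ^ a₄) := ⟨(pow_pos hp.pos a₄).ne'⟩
  have h13 : a₁ ≤ a₃ := le_trans h12 h23
  have h14 : a₁ ≤ a₄ := le_trans h13 h34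
  -- level 4 : cyclic group
  have tc4 : ∀ c, c ≤ a₁ →
      Nat.card {x : ZMod (p ^ a₄) // p ^ c • x = 0} = p ^ (1 * c) := by
    intro c hc
    rw [one_mul]
    exact torCard_zmod hp (le_trans hc h14)
  have td4 : ∀ c d, c + d ≤ a₁ →
      ∀ x : ZMod (p ^ a₄), p ^ c • x = 0 → ∃ y, p ^ d • y = x :=
    fun c d h => torDiv_zmod hp (le_trans h h14)
  -- level 3
  have n3 : ∀ b', b' ≤ a₁ →
      Nat.card {H : AddSubgroup (ZMod (p ^ a₃) × ZMod (p ^ a₄)) // H.index = p ^ b'}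
        = t3 p b' := by
    intro b' hb'
    rw [rec_count p a₃ a₁ 1 b' hp hb' h13 (ZMod (p ^ a₄)) tc4 td4]
    refine Finset.sum_congr rfl fun c hc => ?_
    rw [count_cyclic hp (le_trans (Nat.sub_le b' c) (le_trans hb' h14))]
  have tc3 : ∀ c, c ≤ a₁ →
      Nat.card {x : ZMod (p ^ a₃) × ZMod (p ^ a₄) // p ^ c • x = 0} = p ^ (2 * c) := by
    intro c hc
    rw [torCard_prod, torCard_zmod hp (le_trans hc h13), torCard_zmod hp (le_trans hc h14),
      ← pow_add]
    congr 1
    omega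
  have td3 : ∀ c d, c + d ≤ a₁ →
      ∀ x : ZMod (p ^ a₃) × ZMod (p ^ a₄), p ^ c • x = 0 → ∃ y, p ^ d • y = x :=
    fun c d h => torDiv_prod (torDiv_zmod hp (le_trans h h13)) (td4 c d h)
  -- level 2
  have n2 : ∀ b', b' ≤ a₁ →
      Nat.card {H : AddSubgroup (ZMod (p ^ a₂) × ZMod (p ^ a₃) × ZMod (p ^ a₄)) //
        H.index = p ^ b'} = t2 p b' := by
    intro b' hb'
    rw [rec_count p a₂ a₁ 2 b' hp hb' h12 (ZMod (p ^ a₃) × ZMod (p ^ a₄)) tc3 td3]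
    refine Finset.sum_congr rfl fun c hc => ?_
    rw [n3 (b' - c) (le_trans (Nat.sub_le b' c) hb')]
  have tc2 : ∀ c, c ≤ a₁ →
      Nat.card {x : ZMod (p ^ a₂) × ZMod (p ^ a₃) × ZMod (p ^ a₄) // p ^ c • x = 0}
        = p ^ (3 * c) := by
    intro c hc
    rw [torCard_prod, torCard_zmod hp (le_trans hc h12), tc3 c hc, ← pow_add]
    congr 1
    omega
  have td2 : ∀ c d, c + d ≤ a₁ →
      ∀ x : ZMod (p ^ a₂) × ZMod (p ^ a₃) × ZMod (p ^ a₄),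
        p ^ c • x = 0 → ∃ y, p ^ d • y = x :=
    fun c d h => torDiv_prod (torDiv_zmod hp (le_trans h h12)) (td3 c d h)
  -- level 1
  have n1 : Nat.card {H : AddSubgroup
      (ZMod (p ^ a₁) × ZMod (p ^ a₂) × ZMod (p ^ a₃) × ZMod (p ^ a₄)) //
      H.index = p ^ b} = t1 p b := by
    rw [rec_count p a₁ a₁ 3 b hp hb le_rfl
      (ZMod (p ^ a₂) × ZMod (p ^ a₃) × ZMod (p ^ a₄)) tc2 td2]
    refine Finset.sum_congr rfl fun c hc => ?_
    rw [n2 (b - c) (le_trans (Nat.sub_le b c) hb)]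
  rw [n1]
  exact I1 p b
end

section
/- Let p be a prime, k ≥ 1 an integer, and a_1, ..., a_k integers with 1 ≤ a_1 ≤ a_2 ≤ ... ≤ a_k. If b is an integer with a_2 + ... + a_k ≤ b ≤ a_1 + a_2 + ... + a_k, then the number of subgroups of index p^b in ℤ/p^{a_1} × ℤ/p^{a_2} × ... × ℤ/p^{a_k} equals ∏_{i=2}^{k} (p^{a_1+...+a_k-b+i-1} - 1)/(p^{i-1} - 1). -/
/-!
Put `c = a₁ + ⋯ + a_k - b`. A subgroup has index `p^b` iff it has order `p^c`, and the
hypothesis on `b` says exactly that `c ≤ a₁ ≤ a_i` for all `i`.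

Write the group as `ℤ/p^{a₁} × M`. A subgroup `H` of order `p^c` meets `M` in a subgroup `H'` of
order `p^j`, `j ≤ c`, and projects onto the unique subgroup of order `p^{c-j}` of the cyclic
factor, generated by some `g`; by a Goursat-type argument the subgroups with these data are the
"graphs" `{(n • g, m) | m ≡ n • y mod H'}` for `y ∈ (M ⧸ H')[p^{c-j}]`. As `H' ≤ p^{c-j} M`, this
torsion group is as large as `M[p^{c-j}] ≅ (ℤ/p^{c-j})^{k-1}`. Hence the number `N(k, c)` of
subgroups of order `p^c` obeys `N(k, c) = ∑_{j ≤ c} N(k-1, j) p^{(c-j)(k-1)}`, which implies the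
`p`-Pascal rule `N(k+1, c+1) = N(k, c+1) + p^k N(k+1, c)`; the product
`∏_{i<k} (p^{c+i+1} - 1)/(p^{i+1} - 1)` satisfies the same rule.
-/

open Finset

/-- The number of subgroups of order `q^c` of a product of `k` cyclic groups of order at least
`q^c`, when `q` is prime. -/
def subgroupCount (q : ℕ) : ℕ → ℕ → ℕ
  | 0, c => if c = 0 then 1 else 0
  | k + 1, c => ∑ j ∈ range (c + 1), subgroupCount q k j * q ^ ((c - j) * k)

theorem subgroupCount_zero_right (q : ℕ) : ∀ k, subgroupCount q k 0 = 1
  | 0 => rfl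
  | k + 1 => by simp [subgroupCount, subgroupCount_zero_right q k]

theorem subgroupCount_one_left (q c : ℕ) : subgroupCount q 1 c = 1 := by
  simp [subgroupCount]

theorem subgroupCount_succ_succ (q k c : ℕ) :
    subgroupCount q (k + 1) (c + 1) =
      subgroupCount q k (c + 1) + q ^ k * subgroupCount q (k + 1) c := by
  rw [subgroupCount, sum_range_succ, Nat.sub_self, zero_mul, pow_zero, mul_one, add_comm,
    subgroupCount, mul_sum]
  congr 1
  refine sum_congr rfl fun j hj => ?_
  rw [Nat.sub_add_comm (mem_range_succ_iff.1 hj), Nat.succ_mul, pow_add]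
  ring

theorem subgroupCount_mul_prod {R : Type*} [CommRing R] (q k c : ℕ) :
    (subgroupCount q (k + 1) c : R) * ∏ i ∈ range k, ((q : R) ^ (i + 1) - 1) =
      ∏ i ∈ range k, ((q : R) ^ (c + i + 1) - 1) := by
  induction k generalizing c with
  | zero => simp [subgroupCount_one_left]
  | succ k ihk =>
    induction c with
    | zero => simp [subgroupCount_zero_right]
    | succ c ihc =>
      have hshift : ∏ i ∈ range k, ((q : R) ^ (c + (i + 1) + 1) - 1) =
          ∏ i ∈ range k, ((q : R) ^ (c + 1 + i + 1) - 1) :=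
        prod_congr rfl fun i _ => by ring_nf
      rw [subgroupCount_succ_succ, Nat.cast_add, Nat.cast_mul, add_mul, mul_assoc, ihc,
        prod_range_succ (fun i => (q : R) ^ (i + 1) - 1), ← mul_assoc, ihk, prod_range_succ',
        hshift, prod_range_succ]
      push_cast
      ring

theorem cast_subgroupCount {K : Type*} [Field K] [CharZero K] {q : ℕ} (hq : q ≠ 1) (k c : ℕ) :
    (subgroupCount q (k + 1) c : K) =
      ∏ i ∈ range k, (((q : K) ^ (c + i + 1) - 1) / ((q : K) ^ (i + 1) - 1)) := by
  have hden : ∏ i ∈ range k, ((q : K) ^ (i + 1) - 1) ≠ 0 :=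
    prod_ne_zero_iff.2 fun i _ => sub_ne_zero.2 <| by norm_cast; simp [hq]
  rw [prod_div_distrib, ← subgroupCount_mul_prod, mul_div_cancel_right₀ _ hden]

theorem Nat.card_subtype_eq_card_filter {α : Type*} [Fintype α] (P : α → Prop)
    [DecidablePred P] : Nat.card {x // P x} = #{x | P x} := by
  rw [Nat.card_eq_fintype_card, Fintype.card_subtype]

section Subgroups

variable {G : Type*} [AddCommGroup G]

theorem AddSubgroup.le_ker_nsmul_card (K : AddSubgroup G) :
    K ≤ (nsmulAddMonoidHom (Nat.card K) : G →+ G).ker := fun x hx =>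
  congrArg Subtype.val (card_nsmul_eq_zero' (x := (⟨x, hx⟩ : K)))

theorem AddSubgroup.index_eq_pow_iff [Finite G] {p n b : ℕ} (hp : 0 < p)
    (hG : Nat.card G = p ^ n) (hb : b ≤ n) (H : AddSubgroup G) :
    H.index = p ^ b ↔ Nat.card H = p ^ (n - b) := by
  have hmul := H.card_mul_index
  rw [hG, ← Nat.sub_add_cancel hb, pow_add] at hmul
  constructor <;> intro h <;> rw [h] at hmul
  · exact Nat.eq_of_mul_eq_mul_right (pow_pos hp b) hmul
  · exact Nat.eq_of_mul_eq_mul_left (pow_pos hp _) hmul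

theorem card_subgroups_congr {G' : Type*} [AddCommGroup G'] (e : G ≃+ G') (n : ℕ) :
    Nat.card {H : AddSubgroup G // Nat.card H = n} =
      Nat.card {H : AddSubgroup G' // Nat.card H = n} :=
  Nat.card_congr <| e.mapAddSubgroup.toEquiv.subtypeEquiv fun H => by
    rw [← AddSubgroup.card_mapAddSubgroup H e]; rfl

theorem card_subgroups_of_subsingleton [Subsingleton G] {p : ℕ} (hp : p ≠ 1) (c : ℕ) :
    Nat.card {H : AddSubgroup G // Nat.card H = p ^ c} = if c = 0 then 1 else 0 := by
  simp only [Nat.card_unique, eq_comm (a := 1), Nat.pow_eq_one, hp, false_or]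
  split_ifs with hc <;> simp [hc]

theorem card_ker_nsmul_pi {ι : Type*} [Fintype ι] (G : ι → Type*) [∀ i, AddCommGroup (G i)]
    (d : ℕ) :
    Nat.card (nsmulAddMonoidHom d : (∀ i, G i) →+ _).ker =
      ∏ i, Nat.card (nsmulAddMonoidHom d : G i →+ G i).ker := by
  rw [← Nat.card_pi]
  refine Nat.card_congr ((Equiv.subtypeEquivRight fun x => ?_).trans Equiv.subtypePiEquivPi)
  simp [AddMonoidHom.mem_ker, funext_iff]

theorem card_ker_nsmul_quotient [Finite G] {H : AddSubgroup G} {d : ℕ}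
    (hH : H ≤ (nsmulAddMonoidHom d : G →+ G).range) :
    Nat.card (nsmulAddMonoidHom d : G ⧸ H →+ G ⧸ H).ker =
      Nat.card (nsmulAddMonoidHom d : G →+ G).ker := by
  -- `[G ⧸ H : d • (G ⧸ H)] = [G : d • G]`, because `d • (G ⧸ H)` is the image of `d • G ⊇ H`
  have hrange : (nsmulAddMonoidHom d : G ⧸ H →+ G ⧸ H).range =
      (nsmulAddMonoidHom d : G →+ G).range.map (QuotientAddGroup.mk' H) := by
    rw [← AddMonoidHom.range_comp]
    ext y
    constructor
    · rintro ⟨z, rfl⟩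
      induction z using QuotientAddGroup.induction_on with | H x => exact ⟨x, rfl⟩
    · rintro ⟨x, rfl⟩
      exact ⟨x, rfl⟩
  rw [← AddSubgroup.index_range, ← AddSubgroup.index_range, hrange,
    AddSubgroup.index_map_eq _ (QuotientAddGroup.mk'_surjective H)
      (by rwa [QuotientAddGroup.ker_mk'])]

end Subgroups

section Cyclic

variable {C : Type*} [AddCommGroup C] [IsAddCyclic C] [Finite C]

theorem IsAddCyclic.eq_ker_nsmul_card (K : AddSubgroup C) :
    K = (nsmulAddMonoidHom (Nat.card K) : C →+ C).ker := by
  refine AddSubgroup.eq_of_le_of_card_ge K.le_ker_nsmul_card ?_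
  rw [card_nsmulAddMonoidHom_ker, Nat.gcd_eq_right K.card_addSubgroup_dvd_card]

theorem IsAddCyclic.addSubgroup_eq_of_card_eq {K L : AddSubgroup C}
    (h : Nat.card K = Nat.card L) : K = L := by
  rw [eq_ker_nsmul_card K, eq_ker_nsmul_card L, h]

theorem IsAddCyclic.ker_nsmul_le_range_nsmul {d e : ℕ} (h : d * e ∣ Nat.card C) :
    (nsmulAddMonoidHom d : C →+ C).ker ≤ (nsmulAddMonoidHom e).range := by
  obtain ⟨f, hf⟩ := h
  rw [mul_assoc] at hf
  have hef : 0 < e * f := Nat.pos_of_mul_pos_left (hf ▸ Nat.card_pos)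
  have hker : (nsmulAddMonoidHom d : C →+ C).ker = (nsmulAddMonoidHom (e * f)).range := by
    refine addSubgroup_eq_of_card_eq ?_
    rw [card_nsmulAddMonoidHom_ker, card_nsmulAddMonoidHom_range, hf,
      Nat.gcd_eq_right (dvd_mul_right _ _), Nat.gcd_eq_right (dvd_mul_left _ _),
      Nat.mul_div_cancel _ hef]
  rw [hker]
  rintro _ ⟨x, rfl⟩
  exact ⟨f • x, by simp [mul_smul]⟩

theorem IsAddCyclic.exists_addOrderOf_eq {d : ℕ} (hd : d ∣ Nat.card C) :
    ∃ g : C, addOrderOf g = d := by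
  obtain ⟨g, hg⟩ := IsAddCyclic.exists_ofOrder_eq_natCard (α := C)
  obtain ⟨e, he⟩ := hd
  have he0 : e ≠ 0 := by rintro rfl; exact Nat.card_pos.ne' (by simpa using he)
  refine ⟨e • g, ?_⟩
  rw [addOrderOf_nsmul' g he0, hg, he, Nat.gcd_eq_right (dvd_mul_left _ _),
    Nat.mul_div_cancel _ (Nat.pos_of_ne_zero he0)]

theorem ker_nsmul_pi_le_range_nsmul {ι : Type*} (G : ι → Type*) [∀ i, AddCommGroup (G i)]
    [∀ i, IsAddCyclic (G i)] [∀ i, Finite (G i)] {d e : ℕ} (h : ∀ i, d * e ∣ Nat.card (G i)) :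
    (nsmulAddMonoidHom d : (∀ i, G i) →+ _).ker ≤ (nsmulAddMonoidHom e).range := by
  intro x hx
  have hxi (i : ι) : x i ∈ (nsmulAddMonoidHom e : G i →+ G i).range :=
    IsAddCyclic.ker_nsmul_le_range_nsmul (h i) (congrFun hx i)
  choose z hz using hxi
  exact ⟨z, funext hz⟩

end Cyclic

section Goursat

variable {C M : Type*} [AddCommGroup C] [AddCommGroup M]

theorem AddSubgroup.card_eq_card_comap_inr_mul_card_map_fst (H : AddSubgroup (C × M)) :
    Nat.card H =
      Nat.card (H.comap (AddMonoidHom.inr C M)) * Nat.card (H.map (AddMonoidHom.fst C M)) := by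
  let f := (AddMonoidHom.fst C M).comp H.subtype
  rw [← AddSubgroup.card_mul_index f.ker, AddSubgroup.index_ker, AddMonoidHom.range_comp,
    AddSubgroup.range_subtype]
  congr 1
  have hfst (x : f.ker) : x.1.1.1 = 0 := x.2
  exact Nat.card_congr
    { toFun x := ⟨x.1.1.2, by
        rw [AddSubgroup.mem_comap, AddMonoidHom.inr_apply, ← hfst x]; exact x.1.2⟩
      invFun y := ⟨⟨(0, y.1), y.2⟩, rfl⟩
      left_inv x := Subtype.ext (Subtype.ext (Prod.ext (hfst x).symm rfl))
      right_inv _ := rfl }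

/-- The subgroup generated by `0 × H'` and `(g, x)`, for any lift `x` of `y`. -/
def graphSubgroup (H' : AddSubgroup M) (g : C) (y : M ⧸ H') : AddSubgroup (C × M) :=
  (AddSubgroup.zmultiples (g, y)).comap ((AddMonoidHom.id C).prodMap (QuotientAddGroup.mk' H'))

variable {H' : AddSubgroup M} {g : C} {y : M ⧸ H'}

theorem mem_graphSubgroup {z : C × M} :
    z ∈ graphSubgroup H' g y ↔ ∃ n : ℤ, n • g = z.1 ∧ n • y = (z.2 : M ⧸ H') := by
  simp [graphSubgroup, AddSubgroup.mem_zmultiples_iff, Prod.ext_iff]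

theorem comap_inr_graphSubgroup (hy : addOrderOf g • y = 0) :
    (graphSubgroup H' g y).comap (AddMonoidHom.inr C M) = H' := by
  ext x
  simp only [AddSubgroup.mem_comap, AddMonoidHom.inr_apply, mem_graphSubgroup]
  constructor
  · rintro ⟨n, hng, hny⟩
    obtain ⟨m, rfl⟩ : (addOrderOf g : ℤ) ∣ n := addOrderOf_dvd_iff_zsmul_eq_zero.2 hng
    rw [mul_comm, mul_zsmul, natCast_zsmul, hy, zsmul_zero] at hny
    exact (QuotientAddGroup.eq_zero_iff x).1 hny.symm
  · intro hx
    exact ⟨0, by simp, by simp [(QuotientAddGroup.eq_zero_iff x).2 hx]⟩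

theorem map_fst_graphSubgroup :
    (graphSubgroup H' g y).map (AddMonoidHom.fst C M) = AddSubgroup.zmultiples g := by
  ext c
  simp only [AddSubgroup.mem_map, AddMonoidHom.coe_fst, mem_graphSubgroup,
    AddSubgroup.mem_zmultiples_iff]
  constructor
  · rintro ⟨z, ⟨n, hn, -⟩, rfl⟩
    exact ⟨n, hn⟩
  · rintro ⟨n, rfl⟩
    obtain ⟨x, hx⟩ := QuotientAddGroup.mk_surjective (n • y)
    exact ⟨(n • g, x), ⟨n, rfl, hx.symm⟩, rfl⟩

theorem eq_of_graphSubgroup_eq {y₁ y₂ : M ⧸ H'} (hy₂ : addOrderOf g • y₂ = 0)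
    (h : graphSubgroup H' g y₁ = graphSubgroup H' g y₂) : y₁ = y₂ := by
  obtain ⟨x₁, rfl⟩ := QuotientAddGroup.mk_surjective y₁
  obtain ⟨x₂, rfl⟩ := QuotientAddGroup.mk_surjective y₂
  have hmem (x : M) : (g, x) ∈ graphSubgroup H' g x := mem_graphSubgroup.2 ⟨1, by simp, by simp⟩
  have h₁ := hmem x₁
  rw [h] at h₁
  have hsub : x₁ - x₂ ∈ H' := by
    rw [← comap_inr_graphSubgroup hy₂]
    simpa using sub_mem h₁ (hmem x₂)
  exact QuotientAddGroup.eq_iff_sub_mem.2 hsub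

theorem exists_graphSubgroup_eq {H : AddSubgroup (C × M)}
    (hcomap : H.comap (AddMonoidHom.inr C M) = H')
    (hmap : H.map (AddMonoidHom.fst C M) = AddSubgroup.zmultiples g) :
    ∃ y : M ⧸ H', addOrderOf g • y = 0 ∧ graphSubgroup H' g y = H := by
  obtain ⟨x₀, hx₀⟩ : ∃ x₀, (g, x₀) ∈ H := by
    obtain ⟨⟨_, x₀⟩, hx₀, rfl⟩ := hmap ▸ AddSubgroup.mem_zmultiples g
    exact ⟨x₀, hx₀⟩
  have hH' (x : M) : (0, x) ∈ H ↔ (x : M ⧸ H') = 0 := by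
    rw [QuotientAddGroup.eq_zero_iff, ← hcomap]; rfl
  refine ⟨x₀, ?_, ?_⟩
  · rw [← QuotientAddGroup.mk_nsmul, ← hH']
    simpa [addOrderOf_nsmul_eq_zero] using nsmul_mem hx₀ (addOrderOf g)
  ext ⟨c, m⟩
  rw [mem_graphSubgroup]
  constructor
  · rintro ⟨n, rfl, hn⟩
    have hdiff : (0, m - n • x₀) ∈ H := by
      rw [hH', QuotientAddGroup.mk_sub, QuotientAddGroup.mk_zsmul, ← hn, sub_self]
    simpa using add_mem hdiff (zsmul_mem hx₀ n)
  · intro hcm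
    obtain ⟨n, hn⟩ : c ∈ AddSubgroup.zmultiples g := hmap ▸ ⟨(c, m), hcm, rfl⟩
    refine ⟨n, hn, ?_⟩
    have hdiff : (0, m - n • x₀) ∈ H := by simpa [hn] using sub_mem hcm (zsmul_mem hx₀ n)
    rw [hH', QuotientAddGroup.mk_sub, sub_eq_zero, QuotientAddGroup.mk_zsmul] at hdiff
    exact hdiff.symm

theorem card_subgroups_comap_inr_map_fst (H' : AddSubgroup M) (g : C) :
    Nat.card {H : AddSubgroup (C × M) // H.comap (AddMonoidHom.inr C M) = H' ∧
        H.map (AddMonoidHom.fst C M) = AddSubgroup.zmultiples g} =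
      Nat.card (nsmulAddMonoidHom (addOrderOf g) : M ⧸ H' →+ M ⧸ H').ker := by
  refine (Nat.card_eq_of_bijective (fun y => ⟨graphSubgroup H' g y,
    comap_inr_graphSubgroup y.2, map_fst_graphSubgroup⟩) ⟨?_, ?_⟩).symm
  · exact fun y₁ y₂ h => Subtype.ext (eq_of_graphSubgroup_eq y₂.2 (congrArg Subtype.val h))
  · rintro ⟨H, hcomap, hmap⟩
    obtain ⟨y, hy, rfl⟩ := exists_graphSubgroup_eq hcomap hmap
    exact ⟨⟨y, hy⟩, rfl⟩

end Goursat

theorem card_subgroups_comap_inr_eq {C M : Type*} [AddCommGroup C] [IsAddCyclic C] [Finite C]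
    [AddCommGroup M] [Finite M] {H' : AddSubgroup M} {d : ℕ} (hd : d ∣ Nat.card C)
    (hH' : H' ≤ (nsmulAddMonoidHom d : M →+ M).range) :
    Nat.card {H : AddSubgroup (C × M) //
        Nat.card H = Nat.card H' * d ∧ H.comap (AddMonoidHom.inr C M) = H'} =
      Nat.card (nsmulAddMonoidHom d : M →+ M).ker := by
  obtain ⟨g, hg⟩ := IsAddCyclic.exists_addOrderOf_eq hd
  have hiff (H : AddSubgroup (C × M)) :
      (Nat.card H = Nat.card H' * d ∧ H.comap (AddMonoidHom.inr C M) = H') ↔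
        (H.comap (AddMonoidHom.inr C M) = H' ∧
          H.map (AddMonoidHom.fst C M) = AddSubgroup.zmultiples g) := by
    rw [H.card_eq_card_comap_inr_mul_card_map_fst, and_comm]
    refine and_congr_right fun hcomap => ?_
    rw [hcomap, Nat.mul_right_inj Nat.card_pos.ne', ← hg, ← Nat.card_zmultiples]
    exact ⟨IsAddCyclic.addSubgroup_eq_of_card_eq, fun h => h ▸ rfl⟩
  rw [Nat.card_congr (Equiv.subtypeEquivRight hiff), card_subgroups_comap_inr_map_fst, hg,
    card_ker_nsmul_quotient hH']

section PrimePower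

variable {p : ℕ}

theorem card_ker_nsmul_pi_zmod [NeZero p] {ι : Type*} [Fintype ι] (b : ι → ℕ) {m : ℕ}
    (hm : ∀ i, m ≤ b i) :
    Nat.card (nsmulAddMonoidHom (p ^ m) : (∀ i, ZMod (p ^ b i)) →+ _).ker =
      p ^ (m * Fintype.card ι) := by
  have hker (i : ι) : Nat.card (nsmulAddMonoidHom (p ^ m) : ZMod (p ^ b i) →+ _).ker = p ^ m := by
    rw [IsAddCyclic.card_nsmulAddMonoidHom_ker, Nat.card_zmod,
      Nat.gcd_eq_right (pow_dvd_pow p (hm i))]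
  rw [card_ker_nsmul_pi, prod_congr rfl fun i _ => hker i, prod_const, card_univ, ← pow_mul]

theorem card_subgroups_zmod_prod_of_comap_inr [NeZero p] {ι : Type*} [Fintype ι] (b : ι → ℕ)
    {a c j : ℕ} (hca : c ≤ a) (hcb : ∀ i, c ≤ b i) (hjc : j ≤ c)
    {H' : AddSubgroup (∀ i, ZMod (p ^ b i))} (hH' : Nat.card H' = p ^ j) :
    Nat.card {H : AddSubgroup (ZMod (p ^ a) × ∀ i, ZMod (p ^ b i)) //
        Nat.card H = p ^ c ∧ H.comap (AddMonoidHom.inr _ _) = H'} =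
      p ^ ((c - j) * Fintype.card ι) := by
  have hdvd {n : ℕ} (hn : c ≤ n) : p ^ j * p ^ (c - j) ∣ Nat.card (ZMod (p ^ n)) := by
    rw [← pow_add, Nat.add_sub_cancel' hjc, Nat.card_zmod]
    exact pow_dvd_pow p hn
  have hrange : H' ≤ (nsmulAddMonoidHom (p ^ (c - j))).range :=
    H'.le_ker_nsmul_card.trans (hH' ▸ ker_nsmul_pi_le_range_nsmul _ fun i => hdvd (hcb i))
  rw [← card_ker_nsmul_pi_zmod b fun i => (Nat.sub_le c j).trans (hcb i),
    ← card_subgroups_comap_inr_eq (dvd_of_mul_left_dvd (hdvd hca)) hrange, hH', ← pow_add,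
    Nat.add_sub_cancel' hjc]

variable [hp : Fact p.Prime]

theorem card_subgroups_zmod_prod {ι : Type*} [Fintype ι] (b : ι → ℕ) {a c : ℕ} (hca : c ≤ a)
    (hcb : ∀ i, c ≤ b i) :
    Nat.card {H : AddSubgroup (ZMod (p ^ a) × ∀ i, ZMod (p ^ b i)) // Nat.card H = p ^ c} =
      ∑ j ∈ range (c + 1), Nat.card {H' : AddSubgroup (∀ i, ZMod (p ^ b i)) //
        Nat.card H' = p ^ j} * p ^ ((c - j) * Fintype.card ι) := by
  classical
  set M := ∀ i, ZMod (p ^ b i)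
  let inr := AddMonoidHom.inr (ZMod (p ^ a)) M
  have := Fintype.ofFinite (AddSubgroup (ZMod (p ^ a) × M))
  have := Fintype.ofFinite (AddSubgroup M)
  have hlog (H : AddSubgroup (ZMod (p ^ a) × M)) (hH : Nat.card H = p ^ c) :
      Nat.log p (Nat.card (H.comap inr)) ≤ c ∧
        Nat.card (H.comap inr) = p ^ Nat.log p (Nat.card (H.comap inr)) := by
    obtain ⟨j, hj, hcard⟩ := (Nat.dvd_prime_pow hp.out).1
      (hH ▸ Dvd.intro _ H.card_eq_card_comap_inr_mul_card_map_fst.symm)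
    rw [hcard, Nat.log_pow hp.out.one_lt]
    exact ⟨hj, rfl⟩
  -- sort `H` first by `j = log_p |H ∩ M|`, then by `H ∩ M` itself
  rw [Nat.card_subtype_eq_card_filter fun H : AddSubgroup (ZMod (p ^ a) × M) =>
      Nat.card H = p ^ c,
    card_eq_sum_card_fiberwise (f := fun H => Nat.log p (Nat.card (H.comap inr)))
      (t := range (c + 1)) fun H hH => mem_range_succ_iff.2 (hlog H (mem_filter.1 hH).2).1]
  refine sum_congr rfl fun j hj => ?_
  rw [Nat.card_subtype_eq_card_filter fun H' : AddSubgroup M => Nat.card H' = p ^ j,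
    card_eq_sum_card_fiberwise (f := fun H => H.comap inr)
      (t := {H' : AddSubgroup M | Nat.card H' = p ^ j})]
  · refine sum_const_nat fun H' hH' => ?_
    replace hH' : Nat.card H' = p ^ j := (mem_filter.1 hH').2
    rw [← card_subgroups_zmod_prod_of_comap_inr b hca hcb (mem_range_succ_iff.1 hj) hH',
      Nat.card_subtype_eq_card_filter fun H : AddSubgroup (ZMod (p ^ a) × M) =>
        Nat.card H = p ^ c ∧ H.comap inr = H',
      filter_filter, filter_filter]
    refine congrArg card (filter_congr fun H _ => and_congr_right fun _ => ?_)
    refine ⟨And.right, fun h => ⟨?_, h⟩⟩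
    rw [h, hH', Nat.log_pow hp.out.one_lt]
  · intro H hH
    simp only [coe_filter, mem_filter, mem_univ, true_and, Set.mem_ofPred_eq] at hH ⊢
    rw [(hlog H hH.1).2, hH.2]

theorem card_subgroups_pi_zmod {k : ℕ} (a : Fin k → ℕ) {c : ℕ} (hc : ∀ i, c ≤ a i) :
    Nat.card {H : AddSubgroup (∀ i, ZMod (p ^ a i)) // Nat.card H = p ^ c} =
      subgroupCount p k c := by
  induction k generalizing c with
  | zero => exact card_subgroups_of_subsingleton hp.out.ne_one c
  | succ k ih =>
    rw [← card_subgroups_congr (Fin.consLinearEquiv ℤ fun i => ZMod (p ^ a i)).toAddEquiv,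
      card_subgroups_zmod_prod _ (hc 0) fun i : Fin k => hc i.succ, Fintype.card_fin,
      subgroupCount]
    refine sum_congr rfl fun j hj => ?_
    rw [ih _ fun i => (mem_range_succ_iff.1 hj).trans (hc i.succ)]

end PrimePower

theorem rankk_lastcase_general (p k : ℕ) (hp : p.Prime) (hk : 1 ≤ k)
    (a : Fin k → ℕ) (hmono : Monotone a)
    (b : ℕ) (hb1 : (∑ i, a i) - a ⟨0, hk⟩ ≤ b) (hb2 : b ≤ ∑ i, a i) :
    (Nat.card {H : AddSubgroup (∀ i : Fin k, ZMod (p ^ a i)) //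
        H.index = p ^ b} : ℚ) =
      ∏ i ∈ Finset.Icc 2 k,
        (((p : ℚ) ^ ((∑ j, a j) - b + i - 1) - 1) / ((p : ℚ) ^ (i - 1) - 1)) := by
  have := Fact.mk hp
  have hcard : Nat.card (∀ i : Fin k, ZMod (p ^ a i)) = p ^ ∑ i, a i := by
    simp [prod_pow_eq_pow_sum]
  have hc (i : Fin k) : (∑ j, a j) - b ≤ a i := by
    have hsum : a ⟨0, hk⟩ ≤ ∑ j, a j := single_le_sum (fun j _ => Nat.zero_le (a j)) (mem_univ _)
    have hmin : a ⟨0, hk⟩ ≤ a i := hmono (show ⟨0, hk⟩ ≤ i from Nat.zero_le _)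
    omega
  rw [Nat.card_congr (Equiv.subtypeEquivRight (AddSubgroup.index_eq_pow_iff hp.pos hcard hb2)),
    card_subgroups_pi_zmod a hc]
  obtain ⟨k, rfl⟩ : ∃ k', k = k' + 1 := ⟨k - 1, by omega⟩
  rw [cast_subgroupCount hp.ne_one, ← Ico_add_one_right_eq_Icc, prod_Ico_eq_prod_range]
  refine prod_congr (by simp) fun i _ => ?_
  rw [show ∑ j, a j - b + (2 + i) - 1 = ∑ j, a j - b + i + 1 by omega,
    show 2 + i - 1 = i + 1 by omega]

/-- Rank `k`, case `a₂ + ⋯ + a_k ≤ b ≤ a₁ + ⋯ + a_k`: the number of subgroups of index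
`p^b` in `ℤ/p^{a₁} × ⋯ × ℤ/p^{a_k}` is `∏_{i=2}^k (p^{a₁+⋯+a_k-b+i-1}-1)/(p^{i-1}-1)`. -/
theorem rankk_lastcase (p k : ℕ) (hp : p.Prime) (hk : 1 ≤ k)
    (a : Fin k → ℕ) (ha : ∀ i, 1 ≤ a i) (hmono : Monotone a)
    (b : ℕ) (hb1 : (∑ i, a i) - a ⟨0, hk⟩ ≤ b) (hb2 : b ≤ ∑ i, a i) :
    (Nat.card {H : AddSubgroup (∀ i : Fin k, ZMod (p ^ a i)) //
        H.index = p ^ b} : ℚ) =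
      ∏ i ∈ Finset.Icc 2 k,
        (((p : ℚ) ^ ((∑ j, a j) - b + i - 1) - 1) / ((p : ℚ) ^ (i - 1) - 1)) :=
  rankk_lastcase_general p k hp hk a hmono b hb1 hb2
end
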